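/- arXiv:1105.0178 — 7 statements merged into one kernel-verified Lean document; each statement's English description precedes it below -/
import Mathlib

section
/- For every positive integer n, ∑_{k=1}^{n} k²·H_{n+k} = (n(n+1)(2n+1)/6)·(2H_{2n} − H_n) − n(n+1)(10n−1)/36. -/
def harmonic' (n : ℕ) : ℚ := ∑ j ∈ Finset.Icc 1 n, (1 / j : ℚ)

/-! Induction on `n`: passing from `n` to `n + 1` shifts every `H_{n+k}` by `1 / (n + 1 + k)`,
and the resulting sum `∑ k² / (n + 1 + k)` is again harmonic, because
`k² / (m + k) = k - m + m² / (m + k)`. -/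

open Finset

lemma harmonic'_eq_harmonic (n : ℕ) : harmonic' n = harmonic n := by
  simp only [harmonic', harmonic_eq_sum_Icc, one_div]

lemma sum_Icc_sq_div_add (m n : ℕ) :
    ∑ k ∈ Icc 1 n, (k : ℚ) ^ 2 / (m + k)
      = (m : ℚ) ^ 2 * (harmonic (m + n) - harmonic m) + n * (n + 1) / 2 - m * n := by
  induction n with
  | zero => simp
  | succ n ih =>
    rw [sum_Icc_succ_top (by omega), ih, ← add_assoc, harmonic_succ]
    push_cast
    field_simp
    ring

lemma sum_Icc_sq_mul_harmonic_add_succ (n : ℕ) :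
    ∑ k ∈ Icc 1 (n + 1), (k : ℚ) ^ 2 * harmonic (n + 1 + k)
      = ∑ k ∈ Icc 1 n, (k : ℚ) ^ 2 * harmonic (n + k)
        + ∑ k ∈ Icc 1 n, (k : ℚ) ^ 2 / ((n + 1 : ℕ) + k)
        + ((n : ℚ) + 1) ^ 2 * harmonic (2 * (n + 1)) := by
  rw [sum_Icc_succ_top (by omega), ← sum_add_distrib, two_mul]
  congr 1
  · refine sum_congr rfl fun k _ => ?_
    rw [show n + 1 + k = n + k + 1 by omega, harmonic_succ]
    push_cast
    ring
  · push_cast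
    ring

theorem stmt_5_general (n : ℕ) :
    ∑ k ∈ Finset.Icc 1 n, (k : ℚ) ^ 2 * harmonic' (n + k)
      = ((n : ℚ) * (n + 1) * (2 * n + 1) / 6) * (2 * harmonic' (2 * n) - harmonic' n)
        - n * (n + 1) * (10 * n - 1) / 36 := by
  simp only [harmonic'_eq_harmonic]
  induction n with
  | zero => simp
  | succ n ih =>
    rw [sum_Icc_sq_mul_harmonic_add_succ, ih, sum_Icc_sq_div_add,
      show n + 1 + n = 2 * n + 1 by omega, show 2 * (n + 1) = 2 * n + 1 + 1 by omega]
    simp only [harmonic_succ]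
    push_cast
    field_simp
    ring

theorem stmt_5 (n : ℕ) (hn : 0 < n) :
    ∑ k ∈ Finset.Icc 1 n, (k : ℚ) ^ 2 * harmonic' (n + k)
      = ((n : ℚ) * (n + 1) * (2 * n + 1) / 6) * (2 * harmonic' (2 * n) - harmonic' n)
        - n * (n + 1) * (10 * n - 1) / 36 :=
  stmt_5_general n
end

section
/- For every positive integer n, ∑_{k=0}^{n−1} (1/4^k)·C(2k,k)·H_k = 2 − ((n+1)/4^n)·C(2n+2, n+1) + (2n/4^n)·C(2n,n)·H_n. -/
/-! With `c k = C(2k,k) / 4^k`, the identity `(n+1) C(2n+2,n+1) = 2(2n+1) C(2n,n)` turns the claim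
into `∑_{k<n} c k H_k = 2 - 2(2n+1) c n + 2n c n H_n`, and induction on `n` closes it, since
`c (n+1) = (2n+1)/(2n+2) · c n` and `H_{n+1} = H_n + 1/(n+1)`. -/

open Finset Nat

lemma harmonic'_succ (n : ℕ) : harmonic' (n + 1) = harmonic' n + 1 / (n + 1) := by
  rw [harmonic', sum_Icc_succ_top (by omega), ← harmonic']
  push_cast
  rfl

lemma cast_succ_mul_centralBinom_succ (n : ℕ) :
    ((n : ℚ) + 1) * centralBinom (n + 1) = 2 * (2 * n + 1) * centralBinom n := by
  exact_mod_cast succ_mul_centralBinom_succ n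

lemma sum_range_centralBinom_div_four_pow_mul_harmonic' (n : ℕ) :
    ∑ k ∈ range n, (centralBinom k : ℚ) / 4 ^ k * harmonic' k
      = 2 - 2 * (2 * n + 1) * centralBinom n / 4 ^ n
        + 2 * n * centralBinom n / 4 ^ n * harmonic' n := by
  induction n with
  | zero => simp
  | succ n ih =>
    have hcentral : (centralBinom (n + 1) : ℚ) = 2 * (2 * n + 1) * centralBinom n / (n + 1) := by
      rw [← cast_succ_mul_centralBinom_succ]
      field_simp
    rw [sum_range_succ, ih, harmonic'_succ, hcentral, pow_succ]
    push_cast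
    field_simp
    ring

theorem stmt_6_general (n : ℕ) :
    ∑ k ∈ Finset.range n, (1 / 4 ^ k : ℚ) * (Nat.choose (2 * k) k) * harmonic' k
      = 2 - ((n + 1 : ℚ) / 4 ^ n) * (Nat.choose (2 * n + 2) (n + 1))
        + ((2 * n : ℚ) / 4 ^ n) * (Nat.choose (2 * n) n) * harmonic' n := by
  have hcentral := cast_succ_mul_centralBinom_succ n
  rw [show 2 * n + 2 = 2 * (n + 1) by ring]
  simp only [← centralBinom_eq_two_mul_choose]
  calc ∑ k ∈ range n, (1 / 4 ^ k : ℚ) * centralBinom k * harmonic' k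
      = ∑ k ∈ range n, (centralBinom k : ℚ) / 4 ^ k * harmonic' k :=
        sum_congr rfl fun k _ => by ring
    _ = _ := sum_range_centralBinom_div_four_pow_mul_harmonic' n
    _ = _ := by rw [div_mul_eq_mul_div _ _ ((n + 1 : ℕ).centralBinom : ℚ), hcentral]; ring

theorem stmt_6 (n : ℕ) (hn : 0 < n) :
    ∑ k ∈ Finset.range n, (1 / 4 ^ k : ℚ) * (Nat.choose (2 * k) k) * harmonic' k
      = 2 - ((n + 1 : ℚ) / 4 ^ n) * (Nat.choose (2 * n + 2) (n + 1))
        + ((2 * n : ℚ) / 4 ^ n) * (Nat.choose (2 * n) n) * harmonic' n :=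
  stmt_6_general n
end

section
/- For every nonnegative integer n, ∑_{k=0}^{n} C(n,k)·F_{3k} = 2^n·F_{2n}. -/
/-!
Both roots `φ`, `ψ` of `x ^ 2 = x + 1` satisfy `1 + x ^ 3 = 2 * x ^ 2`, so by the binomial theorem
`∑ C(n,k) x ^ (3k) = (1 + x ^ 3) ^ n = 2 ^ n * x ^ (2n)`. Subtracting the two instances and dividing
by `√5` gives the identity through Binet's formula.
-/

open Finset Real goldenRatio

theorem sum_choose_mul_pow_three_mul_of_cube_add_one {R : Type*} [CommSemiring R] {x : R}
    (hx : x ^ 3 + 1 = 2 * x ^ 2) (n : ℕ) :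
    ∑ k ∈ range (n + 1), (n.choose k : R) * x ^ (3 * k) = 2 ^ n * x ^ (2 * n) := by
  calc ∑ k ∈ range (n + 1), (n.choose k : R) * x ^ (3 * k) = (x ^ 3 + 1) ^ n := by
        rw [add_pow]
        exact sum_congr rfl fun k _ => by ring
    _ = 2 ^ n * x ^ (2 * n) := by rw [hx, mul_pow, pow_mul]

theorem cube_add_one_of_sq_eq_add_one {R : Type*} [CommRing R] {x : R} (hx : x ^ 2 = x + 1) :
    x ^ 3 + 1 = 2 * x ^ 2 := by
  linear_combination (x - 1) * hx

theorem stmt_15 (n : ℕ) :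
    ∑ k ∈ Finset.range (n + 1), Nat.choose n k * Nat.fib (3 * k)
      = 2 ^ n * Nat.fib (2 * n) := by
  have hφ := sum_choose_mul_pow_three_mul_of_cube_add_one
    (cube_add_one_of_sq_eq_add_one goldenRatio_sq) n
  have hψ := sum_choose_mul_pow_three_mul_of_cube_add_one
    (cube_add_one_of_sq_eq_add_one goldenConj_sq) n
  rw [← Nat.cast_inj (R := ℝ)]
  push_cast
  simp only [coe_fib_eq, mul_div_assoc', ← sum_div, mul_sub, sum_sub_distrib, hφ, hψ]
end

section
/- For every nonnegative integer n, ∑_{k=0}^{n} C(n,k)·F_{4k} = 3^n·F_{2n}. -/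
/-!
By Binet's formula `F_m = (φ^m - ψ^m)/√5` it suffices to prove the identity with `F_m` replaced by
`x^m` for each root `x` of `X² - X - 1`. For such `x`, `1 + x⁴ = 3x²`, so by the binomial theorem
`∑ C(n,k) x^(4k) = (1 + x⁴)^n = 3^n x^(2n)`.
-/

open Finset Real

theorem sum_range_choose_mul_pow_four_mul {R : Type*} [CommRing R] {x : R} (hx : x ^ 2 = x + 1)
    (n : ℕ) : ∑ k ∈ range (n + 1), (n.choose k : R) * x ^ (4 * k) = 3 ^ n * x ^ (2 * n) := by
  have one_add_pow_four : x ^ 4 + 1 = 3 * x ^ 2 := by linear_combination (x ^ 2 + x - 1) * hx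
  calc ∑ k ∈ range (n + 1), (n.choose k : R) * x ^ (4 * k)
      = (x ^ 4 + 1) ^ n := by
        rw [add_pow]
        exact sum_congr rfl fun k _ => by rw [one_pow, mul_one, pow_mul, mul_comm]
    _ = 3 ^ n * x ^ (2 * n) := by rw [one_add_pow_four, mul_pow, pow_mul]

theorem stmt_16 (n : ℕ) :
    ∑ k ∈ Finset.range (n + 1), Nat.choose n k * Nat.fib (4 * k)
      = 3 ^ n * Nat.fib (2 * n) := by
  apply Nat.cast_injective (R := ℝ)
  push_cast
  simp only [coe_fib_eq, mul_div_assoc', ← sum_div, mul_sub, sum_sub_distrib,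
    sum_range_choose_mul_pow_four_mul goldenRatio_sq, sum_range_choose_mul_pow_four_mul goldenConj_sq]
end

section
/- Let k, n, N be nonnegative integers with n ≥ N ≥ n − k. Then ∑_{j=0}^{k} C(k,j)·((k+n−j)!/(k+N−j)!)·D_{k+N−j} = (−1)^n · ∑_{j=0}^{n} (−1)^j·C(n,j)·(j+k)!. -/
/-!
Write `S(N)` for the left-hand side. Since `D (m + 1) = (m + 1) D m + (-1) ^ (m + 1)`, raising `N`
by one changes `S(N)` by `± ∑ j, (-1) ^ (k - j) C(k, j) (k + n - j)! / (k + N + 1 - j)!`; the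
ratio of factorials is a polynomial of degree `n - N - 1 < k` in `j`, so this `k`-th finite
difference vanishes. Hence `S(N) = S(n) = ∑ j, C(k, j) D (n + j)`. This and the right-hand side
both satisfy Pascal's recurrence `F(n, k + 1) = F(n, k) + F(n + 1, k)` and agree at `k = 0` by the
inclusion-exclusion formula for `D n`.
-/

open Finset Polynomial Nat

theorem Polynomial.sum_range_neg_one_pow_mul_choose_mul_eval_eq_zero {R : Type*} [CommRing R]
    {P : R[X]} {k : ℕ} (hP : P.natDegree < k) :
    ∑ j ∈ range (k + 1), (-1 : R) ^ (k - j) * k.choose j * P.eval (j : R) = 0 := by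
  have h := congr_fun (fwdDiff_iter_eq_zero_of_degree_lt hP) 0
  rw [fwdDiff_iter_eq_sum_shift] at h
  simpa [zsmul_eq_mul] using h

theorem sum_range_neg_one_pow_mul_choose_mul_descFactorial_eq_zero {a k c : ℕ} (ha : a < k)
    (hkc : k ≤ c) :
    ∑ j ∈ range (k + 1), (-1 : ℤ) ^ (k - j) * k.choose j * (c - j).descFactorial a = 0 := by
  have hdeg : ((descPochhammer ℤ a).comp (C (c : ℤ) - X)).natDegree < k := by
    rwa [natDegree_comp, descPochhammer_natDegree, ← neg_sub, natDegree_neg, natDegree_X_sub_C,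
      mul_one]
  rw [← sum_range_neg_one_pow_mul_choose_mul_eval_eq_zero hdeg]
  refine sum_congr rfl fun j hj => ?_
  have hjc : j ≤ c := (Nat.lt_succ_iff.1 (mem_range.1 hj)).trans hkc
  rw [eval_comp, eval_sub, eval_C, eval_X, ← Nat.cast_sub hjc, descPochhammer_eval_eq_descFactorial]

theorem sum_range_choose_succ_mul {R : Type*} [NonAssocSemiring R] (f : ℕ → R) (k : ℕ) :
    ∑ j ∈ range (k + 2), ((k + 1).choose j : R) * f j
      = ∑ j ∈ range (k + 1), (k.choose j : R) * (f j + f (j + 1)) := by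
  simp only [mul_add, sum_add_distrib]
  exact sum_choose_succ_mul (fun i _ => f i) k

theorem sum_range_neg_one_pow_mul_choose_succ_mul {R : Type*} [CommRing R] (f : ℕ → R) (k : ℕ) :
    ∑ j ∈ range (k + 2), (-1 : R) ^ j * (k + 1).choose j * f j
      = ∑ j ∈ range (k + 1), (-1 : R) ^ j * k.choose j * (f j - f (j + 1)) := by
  calc _ = ∑ j ∈ range (k + 2), ((k + 1).choose j : R) * ((-1) ^ j * f j) :=
        sum_congr rfl fun j _ => by ring
    _ = _ := by
      rw [sum_range_choose_succ_mul]
      exact sum_congr rfl fun j _ => by ring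

theorem numDerangements_eq_neg_one_pow_mul_sum (n : ℕ) :
    (numDerangements n : ℤ)
      = (-1 : ℤ) ^ n * ∑ j ∈ range (n + 1), (-1 : ℤ) ^ j * n.choose j * j ! := by
  rw [numDerangements_sum, ← sum_range_reflect, mul_sum]
  refine sum_congr rfl fun j hj => ?_
  obtain ⟨i, rfl⟩ := Nat.exists_eq_add_of_le (Nat.lt_succ_iff.1 (mem_range.1 hj))
  rw [show j + i + 1 - 1 - j = i by omega, show j + i - i = j by omega,
    ← add_descFactorial_eq_ascFactorial, descFactorial_eq_factorial_mul_choose]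
  have hsq : ((-1 : ℤ) ^ j) ^ 2 = 1 := by rw [← pow_mul, pow_mul', neg_one_sq, one_pow]
  rw [add_comm i j]
  push_cast
  linear_combination (-(-1 : ℤ) ^ i * (j ! : ℤ) * (j + i).choose j) * hsq

theorem sum_range_choose_mul_numDerangements_add (n k : ℕ) :
    ∑ j ∈ range (k + 1), (k.choose j : ℤ) * numDerangements (n + j)
      = (-1 : ℤ) ^ n * ∑ j ∈ range (n + 1), (-1 : ℤ) ^ j * n.choose j * (j + k)! := by
  induction k generalizing n with
  | zero => simp [numDerangements_eq_neg_one_pow_mul_sum]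
  | succ k ih =>
    rw [sum_range_choose_succ_mul]
    simp only [mul_add, sum_add_distrib, ← add_assoc, add_right_comm n _ 1, ih n, ih (n + 1)]
    rw [sum_range_neg_one_pow_mul_choose_succ_mul (fun j => ((j + k)! : ℤ))]
    simp only [mul_sub, sum_sub_distrib, add_right_comm _ 1 k]
    ring

theorem factorial_div_mul_numDerangements_succ (m a : ℕ) :
    ((m + 1 + a)! / (m + 1)! : ℚ) * numDerangements (m + 1)
      = ((m + 1 + a)! / m ! : ℚ) * numDerangements m
        + (-1) ^ (m + 1) * (m + 1 + a).descFactorial a := by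
  have hfac : ((m + 1 + a)! : ℚ) = (m + 1)! * (m + 1 + a).descFactorial a := by
    rw [← factorial_mul_descFactorial (Nat.le_add_left a (m + 1)), Nat.add_sub_cancel]
    push_cast
    ring
  have hD : (numDerangements (m + 1) : ℚ) = (m + 1) * numDerangements m - (-1) ^ m := by
    exact_mod_cast numDerangements_succ m
  rw [hfac, hD, factorial_succ]
  push_cast
  field_simp
  ring

def derangementSum (k n N : ℕ) : ℚ :=
  ∑ j ∈ range (k + 1),
    (k.choose j : ℚ) * ((k + n - j)! / (k + N - j)! : ℚ) * numDerangements (k + N - j)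

theorem derangementSum_succ {k n N : ℕ} (h1 : N < n) (h2 : n ≤ N + k) :
    derangementSum k n (N + 1) = derangementSum k n N := by
  have hterm : ∀ j ∈ range (k + 1),
      (k.choose j : ℚ) * ((k + n - j)! / (k + (N + 1) - j)! : ℚ)
          * numDerangements (k + (N + 1) - j)
        = (k.choose j : ℚ) * ((k + n - j)! / (k + N - j)! : ℚ) * numDerangements (k + N - j)
          + (-1) ^ (N + 1) * ((-1) ^ (k - j) * k.choose j
            * ((k + n - j).descFactorial (n - N - 1) : ℚ)) := by
    intro j hj
    have hjk := Nat.lt_succ_iff.1 (mem_range.1 hj)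
    rw [show k + (N + 1) - j = k + N - j + 1 by omega,
      show k + n - j = k + N - j + 1 + (n - N - 1) by omega,
      mul_assoc, factorial_div_mul_numDerangements_succ,
      show k + N - j + 1 = (k - j) + (N + 1) by omega]
    ring
  have hvanish : ∑ j ∈ range (k + 1),
      (-1 : ℚ) ^ (k - j) * k.choose j * ((k + n - j).descFactorial (n - N - 1) : ℚ) = 0 := by
    exact_mod_cast sum_range_neg_one_pow_mul_choose_mul_descFactorial_eq_zero
      (a := n - N - 1) (k := k) (c := k + n) (by omega) (by omega)
  rw [derangementSum, derangementSum, sum_congr rfl hterm, sum_add_distrib, ← mul_sum, hvanish,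
    mul_zero, add_zero]

theorem derangementSum_eq_of_le {k n N : ℕ} (h1 : N ≤ n) (h2 : n ≤ N + k) :
    derangementSum k n N = derangementSum k n n := by
  obtain ⟨d, rfl⟩ := Nat.exists_eq_add_of_le h1
  induction d generalizing N with
  | zero => rfl
  | succ d ih =>
    rw [← derangementSum_succ (by omega) h2, show N + (d + 1) = N + 1 + d by omega]
    exact ih (by omega) (by omega)

theorem derangementSum_self (k n : ℕ) :
    derangementSum k n n = ∑ j ∈ range (k + 1), (k.choose j : ℚ) * numDerangements (n + j) := by
  rw [derangementSum, ← sum_range_reflect]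
  refine sum_congr rfl fun j hj => ?_
  have hjk := Nat.lt_succ_iff.1 (mem_range.1 hj)
  rw [Nat.add_sub_cancel, choose_symm hjk, show k + n - (k - j) = n + j by omega,
    div_self (by positivity), mul_one]

theorem stmt_17 (k n N : ℕ) (h1 : N ≤ n) (h2 : n ≤ N + k) :
    ∑ j ∈ Finset.range (k + 1),
        (Nat.choose k j : ℚ) * ((k + n - j).factorial / (k + N - j).factorial : ℚ)
          * (numDerangements (k + N - j) : ℚ)
      = (-1 : ℚ) ^ n * ∑ j ∈ Finset.range (n + 1),
          (-1 : ℚ) ^ j * (Nat.choose n j : ℚ) * ((j + k).factorial : ℚ) := by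
  rw [← derangementSum, derangementSum_eq_of_le h1 h2, derangementSum_self]
  exact_mod_cast sum_range_choose_mul_numDerangements_add n k
end

section
/- For every nonnegative integer n, ∑_{k=0}^{n} ∑_{j=0}^{k} C(n,k)·C(n+k,k)·C(k,j)³ = ∑_{k=0}^{n} C(n,k)²·C(n+k,k)² (the Apéry–Schmidt–Strehl identity). -/
/-!
Expanding `C(2j, k)` by Vandermonde's convolution and evaluating the inner
sums gives `∑_j C(k,j)^3 = ∑_j C(k,j)^2 C(2j,k)`. After this substitution and an exchange of
summations, it suffices to show `∑_k C(n,k) C(n+k,k) C(k,j)^2 C(2j,k) = C(n,j)^2 C(n+j,j)^2`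
for each `j ≤ n`. Writing `k = j + x` and `n = j + a`, trinomial revision reduces this to
`∑_x C(a,x) C(j,x) C(p+x, a+j) = C(p,a) C(p,j)` at `p = a + 2j`, an identity that holds for
every `p` and follows from two more Vandermonde convolutions.
-/

open Finset

namespace Nat

theorem add_choose_eq_sum_range (p q r : ℕ) :
    (p + q).choose r = ∑ i ∈ range (r + 1), p.choose i * q.choose (r - i) := by
  rw [add_choose_eq, Finset.Nat.sum_antidiagonal_eq_sum_range_succ_mk]

theorem sum_range_choose_mul_choose (a b : ℕ) :
    ∑ i ∈ range (a + 1), a.choose i * b.choose i = (a + b).choose a := by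
  rw [add_comm a b, add_choose_eq_sum_range]
  refine sum_congr rfl fun i hi => ?_
  rw [mul_comm, choose_symm (mem_range_succ_iff.mp hi)]

theorem choose_mul_choose_sub {n k : ℕ} (hk : k ≤ n) (s : ℕ) :
    n.choose k * k.choose s = n.choose s * (n - s).choose (n - k) := by
  rcases le_or_gt s k with hs | hs
  · rw [choose_mul hs, ← choose_symm (by omega : k - s ≤ n - s)]
    congr 2
    omega
  · rw [choose_eq_zero_of_lt hs, mul_zero]
    rcases le_or_gt s n with hsn | hsn
    · rw [choose_eq_zero_of_lt (by omega : n - s < n - k), mul_zero]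
    · rw [choose_eq_zero_of_lt hsn, zero_mul]

theorem sum_range_choose_sq_mul_choose_mul_choose {k a : ℕ} (ha : a ≤ k) :
    ∑ j ∈ range (k + 1), k.choose j ^ 2 * (j.choose a * j.choose (k - a)) = k.choose a ^ 3 := by
  have hterm : ∀ j ∈ range (k + 1), k.choose j ^ 2 * (j.choose a * j.choose (k - a)) =
      k.choose a ^ 2 * ((k - a).choose (k - j) * a.choose (k - j)) := by
    intro j hj
    have hjk := mem_range_succ_iff.mp hj
    have hja := choose_mul_choose_sub hjk a
    have hjb := choose_mul_choose_sub hjk (k - a)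
    rw [choose_symm ha, Nat.sub_sub_self ha] at hjb
    calc _ = (k.choose j * j.choose a) * (k.choose j * j.choose (k - a)) := by ring
      _ = _ := by rw [hja, hjb]; ring
  have hreflect : ∑ j ∈ range (k + 1), (k - a).choose (k - j) * a.choose (k - j)
      = ∑ i ∈ range (k + 1), (k - a).choose i * a.choose i := by
    rw [← sum_range_reflect]
    refine sum_congr rfl fun i hi => ?_
    rw [add_tsub_cancel_right, Nat.sub_sub_self (mem_range_succ_iff.mp hi)]
  have hshrink : ∑ i ∈ range (k + 1), (k - a).choose i * a.choose i
      = ∑ i ∈ range (k - a + 1), (k - a).choose i * a.choose i :=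
    eventually_constant_sum (fun i hi => by rw [choose_eq_zero_of_lt (by omega), zero_mul])
      (by omega)
  rw [sum_congr rfl hterm, ← mul_sum, hreflect, hshrink, sum_range_choose_mul_choose,
    Nat.sub_add_cancel ha, choose_symm ha]
  ring

theorem sum_range_choose_pow_three_eq_sum_choose_sq_mul_choose (k : ℕ) :
    ∑ j ∈ range (k + 1), k.choose j ^ 3
      = ∑ j ∈ range (k + 1), k.choose j ^ 2 * (2 * j).choose k := by
  simp_rw [two_mul, add_choose_eq_sum_range _ _ k, mul_sum]
  rw [sum_comm]
  exact sum_congr rfl fun a ha =>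
    (sum_range_choose_sq_mul_choose_mul_choose (mem_range_succ_iff.mp ha)).symm

theorem sum_range_choose_mul_choose_mul_add_choose (m n p : ℕ) :
    ∑ k ∈ range (m + 1), m.choose k * n.choose k * (p + k).choose (m + n)
      = p.choose m * p.choose n := by
  have hinner : ∀ i, ∑ k ∈ range (m + 1), m.choose k * n.choose k * k.choose i
      = m.choose i * (n + (m - i)).choose m := by
    intro i
    rw [add_choose_eq_sum_range n (m - i) m, mul_sum]
    refine sum_congr rfl fun k hk => ?_
    have hk' := choose_mul_choose_sub (mem_range_succ_iff.mp hk) i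
    calc _ = (m.choose k * k.choose i) * n.choose k := by ring
      _ = _ := by rw [hk']; ring
  have hvanish :
      ∀ i ≥ n + 1, m.choose i * (n + (m - i)).choose m * p.choose (m + n - i) = 0 := by
    intro i hi
    rcases le_or_gt i m with him | him
    · rw [choose_eq_zero_of_lt (by omega : n + (m - i) < m), mul_zero, zero_mul]
    · rw [choose_eq_zero_of_lt him, zero_mul, zero_mul]
  have hterm : ∀ i ≤ n, m.choose i * (n + (m - i)).choose m * p.choose (m + n - i)
      = p.choose m * (m.choose i * (p - m).choose (n - i)) := by
    intro i hi
    rcases le_or_gt i m with him | him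
    · have h := choose_mul (n := p) (by omega : m ≤ m + n - i)
      rw [show m + n - i - m = n - i by omega] at h
      rw [show n + (m - i) = m + n - i by omega, mul_assoc, mul_comm _ (p.choose _), h]
      ring
    · rw [choose_eq_zero_of_lt him]
      ring
  calc _ = ∑ k ∈ range (m + 1), ∑ i ∈ range (m + n + 1),
        m.choose k * n.choose k * k.choose i * p.choose (m + n - i) := by
        refine sum_congr rfl fun k _ => ?_
        rw [add_comm p k, add_choose_eq_sum_range, mul_sum]
        exact sum_congr rfl fun i _ => by ring
    _ = ∑ i ∈ range (m + n + 1),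
          m.choose i * (n + (m - i)).choose m * p.choose (m + n - i) := by
        rw [sum_comm]
        exact sum_congr rfl fun i _ => by rw [← sum_mul, hinner]
    _ = ∑ i ∈ range (n + 1), m.choose i * (n + (m - i)).choose m * p.choose (m + n - i) :=
        eventually_constant_sum hvanish (by omega)
    _ = p.choose m * ∑ i ∈ range (n + 1), m.choose i * (p - m).choose (n - i) := by
        rw [mul_sum]
        exact sum_congr rfl fun i hi => hterm i (mem_range_succ_iff.mp hi)
    _ = p.choose m * p.choose n := by
        rw [← add_choose_eq_sum_range]
        rcases le_or_gt m p with hmp | hmp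
        · rw [Nat.add_sub_cancel' hmp]
        · rw [choose_eq_zero_of_lt hmp, zero_mul, zero_mul]

theorem sum_Icc_choose_mul_add_choose_mul_choose_sq_mul_choose {j n : ℕ} (hj : j ≤ n) :
    ∑ k ∈ Icc j n, n.choose k * (n + k).choose k * (k.choose j ^ 2 * (2 * j).choose k)
      = n.choose j ^ 2 * (n + j).choose j ^ 2 := by
  obtain ⟨a, rfl⟩ := Nat.exists_eq_add_of_le hj
  have hterm : ∀ x, (j + a).choose (j + x) * (j + a + (j + x)).choose (j + x)
        * ((j + x).choose j ^ 2 * (2 * j).choose (j + x))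
      = (j + a).choose j * (2 * j).choose j
        * (a.choose x * j.choose x * (a + 2 * j + x).choose (a + j)) := by
    intro x
    have hn := choose_mul (n := j + a) (le_add_right j x)
    have h2j := choose_mul (n := 2 * j) (le_add_right j x)
    rw [add_tsub_cancel_left, add_tsub_cancel_left] at hn
    rw [two_mul, add_tsub_cancel_left, add_tsub_cancel_left, ← two_mul] at h2j
    have hsymm : (j + a + (j + x)).choose (j + x) = (a + 2 * j + x).choose (a + j) := by
      rw [show j + a + (j + x) = a + 2 * j + x by ring]
      exact choose_symm_of_eq_add (by ring)
    calc _ = ((j + a).choose (j + x) * (j + x).choose j)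
          * ((2 * j).choose (j + x) * (j + x).choose j) * (j + a + (j + x)).choose (j + x) := by
          ring
      _ = _ := by rw [hn, h2j, hsymm]; ring
  have hcentral :
      (a + 2 * j).choose a * (2 * j).choose j = (j + a + j).choose j * (j + a).choose j := by
    rw [choose_symm_add, choose_mul (by omega : j ≤ 2 * j), show a + 2 * j - j = j + a by omega,
      show 2 * j - j = j by omega, show a + 2 * j = j + a + j by omega]
  rw [← Ico_add_one_right_eq_Icc, sum_Ico_eq_sum_range, show j + a + 1 - j = a + 1 by omega,
    sum_congr rfl fun x _ => hterm x, ← mul_sum, sum_range_choose_mul_choose_mul_add_choose]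
  calc _ = (j + a).choose j * ((a + 2 * j).choose a * (2 * j).choose j)
        * (a + 2 * j).choose j := by ring
    _ = _ := by rw [hcentral, show a + 2 * j = j + a + j by omega]; ring

end Nat

theorem stmt_18 (n : ℕ) :
    ∑ k ∈ Finset.range (n + 1), ∑ j ∈ Finset.range (k + 1),
        Nat.choose n k * Nat.choose (n + k) k * (Nat.choose k j) ^ 3
      = ∑ k ∈ Finset.range (n + 1),
          (Nat.choose n k) ^ 2 * (Nat.choose (n + k) k) ^ 2 := by
  calc _ = ∑ k ∈ range (n + 1), ∑ j ∈ range (k + 1),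
        n.choose k * (n + k).choose k * (k.choose j ^ 2 * (2 * j).choose k) := by
        refine sum_congr rfl fun k _ => ?_
        rw [← mul_sum, ← mul_sum, Nat.sum_range_choose_pow_three_eq_sum_choose_sq_mul_choose]
    _ = ∑ j ∈ range (n + 1), ∑ k ∈ Icc j n,
        n.choose k * (n + k).choose k * (k.choose j ^ 2 * (2 * j).choose k) :=
        sum_comm' fun k j => by simp only [mem_range, mem_Icc]; omega
    _ = _ := sum_congr rfl fun j hj =>
        Nat.sum_Icc_choose_mul_add_choose_mul_choose_sq_mul_choose (mem_range_succ_iff.mp hj)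
end

section
/- For every nonnegative integer n, ∑_{k=0}^{n} (∑_{j=0}^{k} C(n,j))³ = n·2^{3n−1} + 2^{3n} − 3n·2^{n−2}·C(2n,n) (Calkin's identity). -/
/-!
Write `s k = ∑_{j ≤ k} C(n, j)`. When `k + l = n - 1` the partial sums `s k` and `s l` are
complementary, `s k + s l = 2^n`, so pairing `k` with `n - 1 - k` and using
`a³ + b³ = (a + b)³ - 3ab(a + b)` reduces the identity to `∑_{k+l=n-1} s k * s l = n C(2n, n) / 2`.
As `s k` is the `k`-th coefficient of `(1 + X)^n / (1 - X)`, that convolution is the `(n-1)`-th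
coefficient of `(1 + X)^(2n) / (1 - X)²`, namely `∑_{a<n} (n - a) C(2n, a)`, which telescopes since
`(a + 1) C(2n, a + 1) - a C(2n, a) = 2 (n - a) C(2n, a)`.
-/

open Finset PowerSeries

section
variable {R : Type*} [CommRing R]

theorem PowerSeries.coeff_mul_mk_one (φ : R⟦X⟧) (n : ℕ) :
    coeff n (φ * PowerSeries.mk 1) = ∑ i ∈ range (n + 1), coeff i φ := by
  simp [coeff_mul, Finset.Nat.sum_antidiagonal_eq_sum_range_succ_mk]

theorem PowerSeries.coeff_mk_one_sq (n : ℕ) :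
    coeff n ((PowerSeries.mk 1 : R⟦X⟧) ^ 2) = (n : R) + 1 := by
  simp [mk_one_pow_eq_mk_choose_add R 1, add_comm]

theorem sum_antidiagonal_partialSum_mul_partialSum (a b : ℕ → R) (m : ℕ) :
    ∑ p ∈ antidiagonal m, (∑ i ∈ range (p.1 + 1), a i) * (∑ j ∈ range (p.2 + 1), b j)
      = ∑ p ∈ antidiagonal m, (∑ q ∈ antidiagonal p.1, a q.1 * b q.2) * (p.2 + 1) := by
  have h := congrArg (coeff m)
    (show (PowerSeries.mk a * PowerSeries.mk 1) * (PowerSeries.mk b * PowerSeries.mk 1)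
      = (PowerSeries.mk a * PowerSeries.mk b) * (PowerSeries.mk 1) ^ 2 by ring)
  rw [coeff_mul, coeff_mul] at h
  simp only [coeff_mul_mk_one, coeff_mk_one_sq] at h
  simpa only [coeff_mul, coeff_mk] using h

theorem sum_range_sub_two_mul_mul_choose (N m : ℕ) :
    ∑ a ∈ range m, ((N : R) - 2 * a) * N.choose a = m * N.choose m := by
  induction m with
  | zero => simp
  | succ m ih =>
    rw [sum_range_succ, ih]
    rcases le_or_gt m N with hm | hm
    · have h : ((N.choose (m + 1) * (m + 1) : ℕ) : R) = (N.choose m * (N - m) : ℕ) := by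
        rw [Nat.choose_succ_right_eq]
      push_cast [hm] at h ⊢
      linear_combination -h
    · simp [Nat.choose_eq_zero_of_lt hm, Nat.choose_eq_zero_of_lt (Nat.lt_succ_of_lt hm)]

theorem two_mul_sum_range_pow_three_of_add_eq (f : ℕ → R) (m : ℕ) (T : R)
    (hT : ∀ p ∈ antidiagonal m, f p.1 + f p.2 = T) :
    2 * ∑ k ∈ range (m + 1), f k ^ 3
      = (m + 1) * T ^ 3 - 3 * T * ∑ p ∈ antidiagonal m, f p.1 * f p.2 := by
  have hfst : ∑ p ∈ antidiagonal m, f p.1 ^ 3 = ∑ k ∈ range (m + 1), f k ^ 3 :=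
    Nat.sum_antidiagonal_eq_sum_range_succ (fun i _ => f i ^ 3) m
  have hsnd : ∑ p ∈ antidiagonal m, f p.2 ^ 3 = ∑ p ∈ antidiagonal m, f p.1 ^ 3 :=
    Nat.sum_antidiagonal_swap (f := fun p => f p.1 ^ 3)
  have hpair : ∀ p ∈ antidiagonal m, f p.1 ^ 3 + f p.2 ^ 3 = T ^ 3 - 3 * T * (f p.1 * f p.2) := by
    intro p hp
    rw [← hT p hp]
    ring
  calc 2 * ∑ k ∈ range (m + 1), f k ^ 3
      = ∑ p ∈ antidiagonal m, (f p.1 ^ 3 + f p.2 ^ 3) := by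
        rw [sum_add_distrib, hsnd, hfst, two_mul]
    _ = (m + 1) * T ^ 3 - 3 * T * ∑ p ∈ antidiagonal m, f p.1 * f p.2 := by
        rw [sum_congr rfl hpair, sum_sub_distrib, sum_const, Nat.card_antidiagonal, nsmul_eq_mul,
          ← mul_sum]
        push_cast
        ring

end

theorem sum_range_choose_add_sum_range_choose (i j : ℕ) :
    ∑ k ∈ range (i + 1), (i + j + 1).choose k + ∑ k ∈ range (j + 1), (i + j + 1).choose k
      = 2 ^ (i + j + 1) := by
  rw [← Nat.sum_range_choose, show i + j + 1 + 1 = (i + 1) + (j + 1) by ring,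
    sum_range_add _ (i + 1) (j + 1)]
  congr 1
  rw [← sum_range_reflect]
  refine sum_congr rfl fun k hk => Nat.choose_symm_of_eq_add ?_
  rw [mem_range] at hk
  omega

theorem two_mul_sum_antidiagonal_choose_mul_succ (m : ℕ) :
    2 * ∑ p ∈ antidiagonal m, ((2 * (m + 1)).choose p.1 : ℚ) * (p.2 + 1)
      = (m + 1) * (2 * (m + 1)).choose (m + 1) := by
  rw [Nat.sum_antidiagonal_eq_sum_range_succ (fun i j => ((2 * (m + 1)).choose i : ℚ) * (j + 1)),
    mul_sum]
  have h := sum_range_sub_two_mul_mul_choose (R := ℚ) (2 * (m + 1)) (m + 1)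
  push_cast at h ⊢
  rw [← h]
  refine sum_congr rfl fun k hk => ?_
  rw [mem_range] at hk
  push_cast [Nat.le_of_lt_succ hk]
  ring

theorem stmt_19 (n : ℕ) :
    ∑ k ∈ Finset.range (n + 1), ((∑ j ∈ Finset.range (k + 1), (Nat.choose n j : ℚ))) ^ 3
      = (n : ℚ) * 2 ^ (3 * n) / 2 + 2 ^ (3 * n)
        - 3 * n * 2 ^ n / 4 * (Nat.choose (2 * n) n) := by
  rcases n with _ | m
  · norm_num
  set s : ℕ → ℚ := fun k => ∑ j ∈ range (k + 1), ((m + 1).choose j : ℚ) with hs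
  change ∑ k ∈ range (m + 1 + 1), s k ^ 3 = _
  have hfull : s (m + 1) = 2 ^ (m + 1) := by
    simp only [hs]
    exact_mod_cast Nat.sum_range_choose (m + 1)
  have hcompl : ∀ p ∈ antidiagonal m, s p.1 + s p.2 = 2 ^ (m + 1) := by
    rintro ⟨i, j⟩ hij
    rw [HasAntidiagonal.mem_antidiagonal] at hij
    subst hij
    simp only [hs]
    exact_mod_cast sum_range_choose_add_sum_range_choose i j
  have hcross : 2 * ∑ p ∈ antidiagonal m, s p.1 * s p.2
      = (m + 1) * (2 * (m + 1)).choose (m + 1) := by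
    rw [hs, sum_antidiagonal_partialSum_mul_partialSum, ← two_mul_sum_antidiagonal_choose_mul_succ]
    simp_rw [← Nat.cast_mul, ← Nat.cast_sum, ← Nat.add_choose_eq, ← two_mul]
  have hcubes := two_mul_sum_range_pow_three_of_add_eq s m _ hcompl
  rw [sum_range_succ, hfull]
  push_cast at hcubes ⊢
  linear_combination (1 / 2 : ℚ) * hcubes - (3 / 4 * 2 ^ (m + 1) : ℚ) * hcross
end
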